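/- arXiv:2107.05159 — 10 statements merged into one kernel-verified Lean document; each statement's English description precedes it below -/
import Mathlib

section
/- Let w be a connected positive weight on n vertices and A(w) its weight matrix. If q : Fin n → ℝ satisfies (A(w) *ᵥ q) i ≥ 0 for every i ∈ Fin n, then q is constant (and consequently A(w) *ᵥ q = 0). In particular, the range of A(w) contains no nonzero entrywise-nonnegative vector. -/
open Matrix Finset

def weightMatrix {n : ℕ} (w : Fin n → Fin n → ℝ) : Matrix (Fin n) (Fin n) ℝ :=
  Matrix.of fun i j => if i = j then -(∑ k ∈ Finset.univ.erase i, w i k) else w i j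

def IsConnPosWeight {n : ℕ} (w : Fin n → Fin n → ℝ) : Prop :=
  (∀ i, w i i = 0) ∧ (∀ i j, 0 ≤ w i j) ∧
  (∀ i j : Fin n, i ≠ j → (0 < w i j ↔ 0 < w j i)) ∧
  (SimpleGraph.fromRel fun i j : Fin n => 0 < w i j).Connected

lemma mulVec_eq {n : ℕ} (w : Fin n → Fin n → ℝ) (h0 : ∀ i, w i i = 0) (q : Fin n → ℝ) (i : Fin n) :
    (weightMatrix w *ᵥ q) i = ∑ j, w i j * (q j - q i) := by
  have hR : ∑ j, w i j * (q j - q i)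
      = ∑ j ∈ Finset.univ.erase i, w i j * q j
        - (∑ k ∈ Finset.univ.erase i, w i k) * q i := by
    rw [← Finset.sum_erase_add _ _ (Finset.mem_univ i), h0 i, zero_mul, add_zero]
    simp only [mul_sub, Finset.sum_sub_distrib, Finset.sum_mul]
  rw [hR]
  simp only [mulVec, dotProduct, weightMatrix, Matrix.of_apply]
  rw [← Finset.sum_erase_add _ _ (Finset.mem_univ i), if_pos rfl,
    Finset.sum_congr rfl (fun j hj => by
      rw [if_neg (Finset.ne_of_mem_erase hj).symm])]
  ring

lemma key {n : ℕ} (hn : 2 ≤ n) (w : Fin n → Fin n → ℝ)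
    (hw : IsConnPosWeight w) (q : Fin n → ℝ)
    (hq : ∀ i, 0 ≤ (weightMatrix w *ᵥ q) i) :
    (∀ i j, q i = q j) ∧ weightMatrix w *ᵥ q = 0 := by
  obtain ⟨h0, hnn, hsym, hconn⟩ := hw
  obtain ⟨i0, -, hi0⟩ := Finset.exists_max_image Finset.univ q ⟨⟨0, by omega⟩, Finset.mem_univ _⟩
  have hmax : ∀ j, q j ≤ q i0 := fun j => hi0 j (Finset.mem_univ j)
  -- step: at a max vertex, neighbors are max
  have step : ∀ i, q i = q i0 → ∀ j, 0 < w i j → q j = q i0 := by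
    intro i hi j hwij
    have hsum := hq i
    rw [mulVec_eq w h0 q i] at hsum
    have hnp : ∀ k ∈ Finset.univ, w i k * (q k - q i) ≤ 0 := fun k _ =>
      mul_nonpos_of_nonneg_of_nonpos (hnn i k) (by rw [hi]; linarith [hmax k])
    have hz : ∑ k, w i k * (q k - q i) = 0 :=
      le_antisymm (Finset.sum_nonpos hnp) hsum
    have := (Finset.sum_eq_zero_iff_of_nonpos hnp).mp hz j (Finset.mem_univ j)
    have hq' : q j - q i = 0 := by
      rcases mul_eq_zero.mp this with h | h
      · exact absurd h (ne_of_gt hwij)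
      · exact h
    rw [hi] at hq'; linarith
  have hall : ∀ j, q j = q i0 := by
    intro j
    obtain ⟨p⟩ := hconn.preconnected i0 j
    have : ∀ (u v : Fin n), q u = q i0 →
        ((SimpleGraph.fromRel fun i j : Fin n => 0 < w i j).Walk u v) → q v = q i0 := by
      intro u v hu p
      induction p with
      | nil => exact hu
      | cons h p ih =>
        rename_i a b c
        apply ih
        obtain ⟨hne, hor⟩ := h
        have hwab : 0 < w a b := by
          rcases hor with h | h
          · exact h
          · exact (hsym a b hne).mpr h
        exact step a hu b hwab
    exact this i0 j rfl p
  have hconst : ∀ i j, q i = q j := fun i j => (hall i).trans (hall j).symm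
  refine ⟨hconst, ?_⟩
  funext i
  rw [Pi.zero_apply, mulVec_eq w h0 q i]
  exact Finset.sum_eq_zero fun j _ => by rw [hconst j i, sub_self, mul_zero]

/-- If `A(w) *ᵥ q` is entrywise nonnegative then `q` is constant and `A(w) *ᵥ q = 0`;
in particular the range of `A(w)` contains no nonzero entrywise-nonnegative vector. -/
theorem stmt_0 {n : ℕ} (hn : 2 ≤ n) (w : Fin n → Fin n → ℝ)
    (hw : IsConnPosWeight w) (q : Fin n → ℝ)
    (hq : ∀ i, 0 ≤ (weightMatrix w *ᵥ q) i) :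
    ((∀ i j, q i = q j) ∧ weightMatrix w *ᵥ q = 0) ∧
      (∀ p : Fin n → ℝ, (∀ i, 0 ≤ p i) → (∃ q' : Fin n → ℝ, weightMatrix w *ᵥ q' = p) →
        p = 0) := by
  refine ⟨key hn w hw q hq, ?_⟩
  rintro p hp ⟨q', rfl⟩
  exact (key hn w hw q' hp).2
end

section
/- Let w be a connected positive weight on n vertices and A(w) its weight matrix, and let B be an n × 2 real matrix. If x and x' are n × 2 real matrices with A(w) * x = B and A(w) * x' = B, then there exists a vector c ∈ ℝ² such that for every i ∈ Fin n the i-th row of x equals the i-th row of x' plus c. In particular, a solution of A(w) * x = B with prescribed first row (e.g. first row equal to 0) is unique. -/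
open Matrix Finset

lemma weightMatrix_apply_sum {n : ℕ} (w : Fin n → Fin n → ℝ) (q : Fin n → ℝ) (i : Fin n) :
    ∑ k, weightMatrix w i k * q k = ∑ k, w i k * (q k - q i) := by
  rw [← Finset.add_sum_erase Finset.univ (fun k => weightMatrix w i k * q k) (mem_univ i),
    ← Finset.add_sum_erase Finset.univ (fun k => w i k * (q k - q i)) (mem_univ i)]
  have h1 : ∀ k ∈ Finset.univ.erase i, weightMatrix w i k * q k = w i k * (q k - q i) + w i k * q i := by
    intro k hk
    have : i ≠ k := fun h => (Finset.mem_erase.mp hk).1 h.symm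
    simp [weightMatrix, this]; ring
  rw [Finset.sum_congr rfl h1, Finset.sum_add_distrib, ← Finset.sum_mul]
  simp [weightMatrix]
  ring

lemma const_of_harmonic {n : ℕ} (w : Fin n → Fin n → ℝ) (hw : IsConnPosWeight w)
    (q : Fin n → ℝ) (hq : ∀ i, ∑ k, w i k * (q k - q i) = 0) :
    ∀ i i', q i = q i' := by
  obtain ⟨hdiag, hnn, hsym, hconn⟩ := hw
  have hne : Nonempty (Fin n) := hconn.nonempty
  obtain ⟨i0, -, hmax⟩ := Finset.exists_max_image Finset.univ q
    ⟨Classical.arbitrary _, Finset.mem_univ _⟩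
  have step : ∀ a b, (SimpleGraph.fromRel fun i j : Fin n => 0 < w i j).Adj a b →
      q a = q i0 → q b = q i0 := by
    intro a b hab ha
    have hwab : 0 < w a b := by
      rcases hab.2 with h' | h'
      · exact h'
      · exact (hsym a b hab.1).mpr h'
    have hle : ∀ k ∈ Finset.univ, w a k * (q k - q a) ≤ 0 := by
      intro k _
      apply mul_nonpos_of_nonneg_of_nonpos (hnn a k)
      have := hmax k (mem_univ k)
      rw [ha]; linarith
    have h0 := (Finset.sum_eq_zero_iff_of_nonpos hle).mp (hq a) b (mem_univ b)
    rcases mul_eq_zero.mp h0 with h | h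
    · exact absurd h hwab.ne'
    · have : q b = q a := by linarith
      rw [this, ha]
  have walk : ∀ a b, (SimpleGraph.fromRel fun i j : Fin n => 0 < w i j).Walk a b →
      q a = q i0 → q b = q i0 := by
    intro a b p
    induction p with
    | nil => exact id
    | cons h p ih => exact fun ha => ih (step _ _ h ha)
  have hall : ∀ i, q i = q i0 := by
    intro i
    obtain ⟨p⟩ := hconn.preconnected i0 i
    exact walk i0 i p rfl
  intro i i'
  rw [hall i, hall i']

/-- Two solutions of `A(w) * x = B` (for `x` an `n × 2` matrix) differ by adding a fixed
vector `c ∈ ℝ²` to every row; in particular a solution with prescribed first row is unique. -/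
theorem stmt_2 {n : ℕ} (hn : 2 ≤ n) (w : Fin n → Fin n → ℝ)
    (hw : IsConnPosWeight w) (B x x' : Matrix (Fin n) (Fin 2) ℝ)
    (hx : weightMatrix w * x = B) (hx' : weightMatrix w * x' = B) :
    (∃ c : Fin 2 → ℝ, ∀ i j, x i j = x' i j + c j) ∧
      (x ⟨0, by omega⟩ = x' ⟨0, by omega⟩ → x = x') := by
  have key : ∀ j : Fin 2, ∀ i i' : Fin n, x i j - x' i j = x i' j - x' i' j := by
    intro j
    apply const_of_harmonic w hw
    intro i
    rw [← weightMatrix_apply_sum]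
    have h1 : (weightMatrix w * x) i j = B i j := by rw [hx]
    have h2 : (weightMatrix w * x') i j = B i j := by rw [hx']
    simp only [Matrix.mul_apply] at h1 h2
    have : (∑ k, weightMatrix w i k * x k j) - ∑ k, weightMatrix w i k * x' k j = 0 := by
      rw [h1, h2]; ring
    rw [← Finset.sum_sub_distrib] at this
    rw [← this]
    apply Finset.sum_congr rfl
    intro k _
    ring
  refine ⟨⟨fun j => x ⟨0, by omega⟩ j - x' ⟨0, by omega⟩ j, fun i j => by
    have := key j i ⟨0, by omega⟩
    show x i j = x' i j + (x ⟨0, by omega⟩ j - x' ⟨0, by omega⟩ j)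
    linarith⟩, ?_⟩
  intro h0
  ext i j
  have := key j i ⟨0, by omega⟩
  have h0j : x ⟨0, by omega⟩ j = x' ⟨0, by omega⟩ j := by rw [h0]
  linarith
end

section
/- Let w be a connected positive weight on n vertices and A(w) its weight matrix. If r, s : Fin n → ℝ both satisfy (A(w))ᵀ *ᵥ r = 0 and (A(w))ᵀ *ᵥ s = 0, then r and s are linearly dependent. Equivalently, the left kernel of A(w) is at most one-dimensional. -/
open Matrix Finset

/-!
A vector `q` in the right kernel of `A(w)` satisfies `∑ⱼ w i j (q j - q i) = 0` at every vertex,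
so at a vertex where `q` is maximal every neighbour shares the maximal value; by connectivity `q`
is constant. Hence the right kernel is spanned by the constant vector, and since `A(w)ᵀ` has the
same rank as `A(w)`, rank–nullity makes the left kernel at most one-dimensional as well.
-/

theorem SimpleGraph.Reachable.mem_of_forall_adj {V : Type*} {G : SimpleGraph V} {S : Set V}
    (hclosed : ∀ a b, G.Adj a b → a ∈ S → b ∈ S) {a b : V} (hab : G.Reachable a b) (ha : a ∈ S) :
    b ∈ S := by
  obtain ⟨p⟩ := hab
  induction p with
  | nil => exact ha
  | cons hadj _ ih => exact ih (hclosed _ _ hadj ha)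

theorem Matrix.finrank_ker_mulVecLin_transpose {K m : Type*} [Field K] [Fintype m]
    [DecidableEq m] (A : Matrix m m K) :
    Module.finrank K (LinearMap.ker Aᵀ.mulVecLin) =
      Module.finrank K (LinearMap.ker A.mulVecLin) := by
  have hA := LinearMap.finrank_range_add_finrank_ker A.mulVecLin
  have hAt := LinearMap.finrank_range_add_finrank_ker Aᵀ.mulVecLin
  have hrank := A.rank_transpose
  rw [Matrix.rank, Matrix.rank] at hrank
  omega

theorem not_linearIndependent_pair_of_finrank_le_one {K V : Type*} [DivisionRing K]
    [AddCommGroup V] [Module K V] {W : Submodule K V} [Module.Finite K W]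
    (hW : Module.finrank K W ≤ 1) {r s : V} (hr : r ∈ W) (hs : s ∈ W) :
    ¬ LinearIndependent K ![r, s] := by
  intro hind
  have hspan : Submodule.span K (Set.range ![r, s]) ≤ W := by
    rw [Submodule.span_le, Matrix.range_cons, Matrix.range_cons, Matrix.range_empty]
    simp [Set.insert_subset_iff, hr, hs]
  have := Submodule.finrank_mono hspan
  rw [finrank_span_eq_card hind, Fintype.card_fin] at this
  omega

theorem weightMatrix_mulVec_apply {n : ℕ} (w : Fin n → Fin n → ℝ) (q : Fin n → ℝ) (i : Fin n) :
    (weightMatrix w *ᵥ q) i = ∑ j ∈ univ.erase i, w i j * (q j - q i) := by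
  have hoff : ∀ j ∈ univ.erase i, weightMatrix w i j * q j = w i j * q j := fun j hj => by
    rw [weightMatrix, of_apply, if_neg (ne_of_mem_erase hj).symm]
  rw [mulVec, dotProduct, ← add_sum_erase _ _ (mem_univ i), sum_congr rfl hoff]
  rw [weightMatrix, of_apply, if_pos rfl, neg_mul, sum_mul, neg_add_eq_sub, ← sum_sub_distrib]
  exact sum_congr rfl fun j _ => by ring

theorem eq_of_weightMatrix_mulVec_eq_zero_of_isMax {n : ℕ} {w : Fin n → Fin n → ℝ}
    (hw : ∀ i j, 0 ≤ w i j) {q : Fin n → ℝ} (hq : weightMatrix w *ᵥ q = 0) {i j : Fin n}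
    (hmax : ∀ k, q k ≤ q i) (hne : i ≠ j) (hij : 0 < w i j) : q j = q i := by
  have hrow : ∑ k ∈ univ.erase i, w i k * (q k - q i) = 0 := by
    rw [← weightMatrix_mulVec_apply, hq, Pi.zero_apply]
  have hterm := (sum_eq_zero_iff_of_nonpos fun k _ =>
    mul_nonpos_of_nonneg_of_nonpos (hw i k) (sub_nonpos.2 (hmax k))).1 hrow j
      (mem_erase.2 ⟨hne.symm, mem_univ j⟩)
  linarith [(mul_eq_zero.1 hterm).resolve_left hij.ne']

theorem IsConnPosWeight.eq_of_weightMatrix_mulVec_eq_zero {n : ℕ} {w : Fin n → Fin n → ℝ}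
    (hw : IsConnPosWeight w) {q : Fin n → ℝ} (hq : weightMatrix w *ᵥ q = 0) (i j : Fin n) :
    q i = q j := by
  obtain ⟨-, hnonneg, hsymm, hconn⟩ := hw
  have : Nonempty (Fin n) := hconn.nonempty
  obtain ⟨i₀, hi₀⟩ := Finite.exists_max q
  have hclosed : ∀ a b, (SimpleGraph.fromRel fun i j : Fin n => 0 < w i j).Adj a b →
      q a = q i₀ → q b = q i₀ := by
    rintro a b ⟨hne, hpos⟩ ha
    have hab : 0 < w a b := hpos.elim id (hsymm a b hne).2
    rw [eq_of_weightMatrix_mulVec_eq_zero_of_isMax hnonneg hq (ha ▸ hi₀) hne hab, ha]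
  rw [(hconn i₀ i).mem_of_forall_adj (S := {k | q k = q i₀}) hclosed rfl,
    (hconn i₀ j).mem_of_forall_adj (S := {k | q k = q i₀}) hclosed rfl]

theorem IsConnPosWeight.finrank_ker_weightMatrix_le_one {n : ℕ} {w : Fin n → Fin n → ℝ}
    (hw : IsConnPosWeight w) :
    Module.finrank ℝ (LinearMap.ker (weightMatrix w).mulVecLin) ≤ 1 := by
  have hker : LinearMap.ker (weightMatrix w).mulVecLin ≤ ℝ ∙ (1 : Fin n → ℝ) := by
    intro q hq
    obtain ⟨i₀⟩ := hw.2.2.2.nonempty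
    refine Submodule.mem_span_singleton.2 ⟨q i₀, funext fun j => ?_⟩
    simp [hw.eq_of_weightMatrix_mulVec_eq_zero hq i₀ j]
  exact (Submodule.finrank_mono hker).trans <| (finrank_span_le_card _).trans (by simp)

theorem stmt_4_general {n : ℕ} (w : Fin n → Fin n → ℝ)
    (hw : IsConnPosWeight w) (r s : Fin n → ℝ)
    (hr : (weightMatrix w)ᵀ *ᵥ r = 0) (hs : (weightMatrix w)ᵀ *ᵥ s = 0) :
    ¬ LinearIndependent ℝ ![r, s] := by
  refine not_linearIndependent_pair_of_finrank_le_one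
    (W := LinearMap.ker (weightMatrix w)ᵀ.mulVecLin) ?_ hr hs
  rw [Matrix.finrank_ker_mulVecLin_transpose]
  exact hw.finrank_ker_weightMatrix_le_one

/-- The left kernel of `A(w)` is at most one-dimensional: any two vectors in the kernel of
`A(w)ᵀ` are linearly dependent. -/
theorem stmt_4 {n : ℕ} (hn : 2 ≤ n) (w : Fin n → Fin n → ℝ)
    (hw : IsConnPosWeight w) (r s : Fin n → ℝ)
    (hr : (weightMatrix w)ᵀ *ᵥ r = 0) (hs : (weightMatrix w)ᵀ *ᵥ s = 0) :
    ¬ LinearIndependent ℝ ![r, s] :=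
  stmt_4_general w hw r s hr hs
end

section
/- Let w be a connected positive weight on n vertices and A(w) its weight matrix. If r : Fin n → ℝ is nonzero and satisfies (A(w))ᵀ *ᵥ r = 0, then all entries of r are nonzero and have the same sign; that is, r i · r j > 0 for all i, j ∈ Fin n. -/
open Matrix Finset

lemma walk_prop {V : Type*} {G : SimpleGraph V} (p : V → Prop)
    (hcl : ∀ a b, G.Adj a b → p a → p b) :
    ∀ {i j : V}, G.Walk i j → p i → p j := by
  intro i j wk
  induction wk with
  | nil => exact fun h => h
  | cons h' _ ih => exact fun hi => ih (hcl _ _ h' hi)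

/-- A nonzero vector in the left kernel of `A(w)` has all entries nonzero and of the same
sign. -/
theorem stmt_5 {n : ℕ} (hn : 2 ≤ n) (w : Fin n → Fin n → ℝ)
    (hw : IsConnPosWeight w) (r : Fin n → ℝ) (hr0 : r ≠ 0)
    (hr : (weightMatrix w)ᵀ *ᵥ r = 0) :
    ∀ i j, 0 < r i * r j := by
  obtain ⟨hw0, hwpos, hwsym, hconn⟩ := hw
  set G := SimpleGraph.fromRel fun i j : Fin n => 0 < w i j with hG
  -- adjacency gives positivity both ways
  have hadj : ∀ a b : Fin n, G.Adj a b → 0 < w a b ∧ 0 < w b a := by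
    intro a b hab
    rw [hG, SimpleGraph.fromRel_adj] at hab
    obtain ⟨hne, h | h⟩ := hab
    · exact ⟨h, (hwsym a b hne).mp h⟩
    · exact ⟨(hwsym b a (Ne.symm hne)).mp h, h⟩
  -- the kernel equation with full sums
  have key : ∀ j, ∑ i, w i j * r i = (∑ k, w j k) * r j := by
    intro j
    have h := congrFun hr j
    simp only [mulVec, dotProduct, Matrix.transpose_apply, weightMatrix, Matrix.of_apply,
      Pi.zero_apply] at h
    have hsplit : ∑ i, (if i = j then -(∑ k ∈ Finset.univ.erase i, w i k) else w i j) * r i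
        = -(∑ k ∈ Finset.univ.erase j, w j k) * r j + ∑ i ∈ Finset.univ.erase j, w i j * r i := by
      rw [← Finset.add_sum_erase _ _ (Finset.mem_univ j)]
      simp only [if_pos rfl]
      congr 1
      exact Finset.sum_congr rfl fun i hi => by
        rw [if_neg (Finset.mem_erase.mp hi).1]
    rw [hsplit] at h
    have h1 : ∑ i ∈ Finset.univ.erase j, w i j * r i = ∑ i, w i j * r i := by
      rw [← Finset.add_sum_erase _ _ (Finset.mem_univ j), hw0 j]; ring
    have h2 : ∑ k ∈ Finset.univ.erase j, w j k = ∑ k, w j k := by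
      rw [← Finset.add_sum_erase _ _ (Finset.mem_univ j), hw0 j]; ring
    rw [h1, h2] at h
    linarith
  -- positivity of row sums
  have hc : ∀ j, 0 < ∑ k, w j k := by
    intro j
    have : Nontrivial (Fin n) := ⟨⟨⟨0, by omega⟩, ⟨1, by omega⟩, by simp [Fin.ext_iff]⟩⟩
    obtain ⟨i, hij⟩ := exists_ne j
    obtain ⟨wk⟩ := hconn.preconnected j i
    cases wk with
    | nil => exact absurd rfl hij.symm
    | cons h' _ =>
      have hpos := (hadj _ _ h').1
      calc (0:ℝ) < w j _ := hpos
        _ ≤ ∑ k, w j k := Finset.single_le_sum (fun k _ => hwpos j k) (Finset.mem_univ _)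
  -- the absolute value vector also satisfies the kernel equation
  have keyabs : ∀ j, ∑ i, w i j * |r i| = (∑ k, w j k) * |r j| := by
    have hge : ∀ j, (∑ k, w j k) * |r j| ≤ ∑ i, w i j * |r i| := by
      intro j
      have h1 : (∑ k, w j k) * |r j| = |(∑ k, w j k) * r j| := by
        rw [abs_mul, abs_of_nonneg (le_of_lt (hc j))]
      rw [h1, ← key j]
      calc |∑ i, w i j * r i| ≤ ∑ i, |w i j * r i| := Finset.abs_sum_le_sum_abs _ _
        _ = ∑ i, w i j * |r i| := Finset.sum_congr rfl fun i _ => by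
            rw [abs_mul, abs_of_nonneg (hwpos i j)]
    have hsum : ∑ j, ((∑ i, w i j * |r i|) - (∑ k, w j k) * |r j|) = 0 := by
      rw [Finset.sum_sub_distrib]
      have : ∑ j : Fin n, ∑ i : Fin n, w i j * |r i|
          = ∑ i : Fin n, (∑ k, w i k) * |r i| := by
        rw [Finset.sum_comm]
        exact Finset.sum_congr rfl fun i _ => by rw [← Finset.sum_mul]
      rw [this]
      exact sub_self _
    have := (Finset.sum_eq_zero_iff_of_nonneg
      (fun j _ => sub_nonneg.mpr (hge j))).mp hsum
    intro j
    have := this j (Finset.mem_univ j)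
    linarith [sub_eq_zero.mp this]
  -- all entries nonzero
  have hne : ∀ i, r i ≠ 0 := by
    by_contra h
    push_neg at h
    obtain ⟨j, hj⟩ := h
    have hall : ∀ i, r i = 0 := by
      intro i
      refine walk_prop (fun a => r a = 0) ?_ ((hconn.preconnected j i).some) hj
      intro a b hab ha
      have h1 : ∑ i, w i a * |r i| = 0 := by
        rw [keyabs a, ha, abs_zero, mul_zero]
      have h2 := (Finset.sum_eq_zero_iff_of_nonneg
        (fun i _ => mul_nonneg (hwpos i a) (abs_nonneg _))).mp h1 b (Finset.mem_univ b)
      have hba := (hadj a b hab).2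
      have : |r b| = 0 := by
        rcases mul_eq_zero.mp h2 with h | h
        · exact absurd h (ne_of_gt hba)
        · exact h
      exact abs_eq_zero.mp this
    exact hr0 (funext hall)
  -- positive entries propagate
  have hP : ∀ a b, G.Adj a b → 0 < r a → 0 < r b := by
    intro a b hab ha
    have h1 : ∑ i, w i a * (|r i| - r i) = 0 := by
      rw [Finset.sum_congr rfl fun i _ => mul_sub (w i a) (|r i|) (r i),
        Finset.sum_sub_distrib, keyabs a, key a, abs_of_pos ha]
      ring
    have h2 := (Finset.sum_eq_zero_iff_of_nonneg
      (fun i _ => mul_nonneg (hwpos i a) (sub_nonneg.mpr (le_abs_self _)))).mp h1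
      b (Finset.mem_univ b)
    have hba := (hadj a b hab).2
    have hrb : |r b| = r b := by
      rcases mul_eq_zero.mp h2 with h | h
      · exact absurd h (ne_of_gt hba)
      · linarith [sub_eq_zero.mp h]
    have := abs_nonneg (r b)
    rw [hrb] at this
    exact lt_of_le_of_ne this (Ne.symm (hne b))
  -- negative entries propagate
  have hN : ∀ a b, G.Adj a b → r a < 0 → r b < 0 := by
    intro a b hab ha
    have h1 : ∑ i, w i a * (|r i| + r i) = 0 := by
      rw [Finset.sum_congr rfl fun i _ => mul_add (w i a) (|r i|) (r i),
        Finset.sum_add_distrib, keyabs a, key a, abs_of_neg ha]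
      ring
    have h2 := (Finset.sum_eq_zero_iff_of_nonneg
      (fun i _ => mul_nonneg (hwpos i a) (by linarith [neg_abs_le (r i)]))).mp h1
      b (Finset.mem_univ b)
    have hba := (hadj a b hab).2
    have hrb : |r b| + r b = 0 := by
      rcases mul_eq_zero.mp h2 with h | h
      · exact absurd h (ne_of_gt hba)
      · exact h
    have := abs_nonneg (r b)
    have : r b ≤ 0 := by linarith
    exact lt_of_le_of_ne this (hne b)
  intro i j
  rcases lt_trichotomy (r i) 0 with h | h | h
  · have : r j < 0 := walk_prop (fun a => r a < 0) hN ((hconn.preconnected i j).some) h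
    exact mul_pos_of_neg_of_neg h this
  · exact absurd h (hne i)
  · have : 0 < r j := walk_prop (fun a => 0 < r a) hP ((hconn.preconnected i j).some) h
    exact mul_pos h this
end

section
/- Let w be a connected positive weight on n vertices and A(w) its weight matrix. Let r : Fin n → ℝ × ℝ assign a plane vector r i = (rˣ i, rʸ i) to each vertex, and suppose (A(w))ᵀ *ᵥ rˣ = 0 and (A(w))ᵀ *ᵥ rʸ = 0 and r is not identically zero. Then all the vectors r i have the same direction; that is, the Euclidean inner product ⟨r i, r j⟩ is strictly positive for all i, j ∈ Fin n. -/
open Matrix Finset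

/-- The Euclidean inner product on `ℝ × ℝ`. -/
def inner2 (a b : ℝ × ℝ) : ℝ := a.1 * b.1 + a.2 * b.2

lemma key_pos {n : ℕ} {w : Fin n → Fin n → ℝ} (hw : IsConnPosWeight w)
    {f : Fin n → ℝ} (hf : (weightMatrix w)ᵀ *ᵥ f = 0)
    {i₀ : Fin n} (h0 : 0 < f i₀) : ∀ j, 0 < f j := by
  obtain ⟨hd, hnn, hsym, hconn⟩ := hw
  have heq : ∀ j, ∑ i, w i j * f i = (∑ k, w j k) * f j := by
    intro j
    have h1 : ∑ i, (weightMatrix w)ᵀ j i * f i = 0 := by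
      have := congrFun hf j
      simpa [Matrix.mulVec, dotProduct] using this
    rw [← Finset.add_sum_erase _ _ (Finset.mem_univ j)] at h1
    have h2 : (weightMatrix w)ᵀ j j = -(∑ k ∈ Finset.univ.erase j, w j k) := by
      simp [weightMatrix]
    have h3 : ∑ i ∈ Finset.univ.erase j, (weightMatrix w)ᵀ j i * f i
        = ∑ i ∈ Finset.univ.erase j, w i j * f i := by
      refine Finset.sum_congr rfl fun i hi => ?_
      have hij : i ≠ j := Finset.ne_of_mem_erase hi
      simp [weightMatrix, hij]
    rw [h2, h3] at h1
    have h4 : ∑ k ∈ Finset.univ.erase j, w j k = ∑ k, w j k :=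
      Finset.sum_erase Finset.univ (hd j)
    have h5 : ∑ i ∈ Finset.univ.erase j, w i j * f i = ∑ i, w i j * f i :=
      Finset.sum_erase Finset.univ (by rw [hd j]; ring)
    rw [h4, h5] at h1
    linarith
  intro j
  by_contra hj
  push_neg at hj
  set S : Finset (Fin n) := Finset.univ.filter (fun v => f v ≤ 0) with hS
  set T : Finset (Fin n) := Finset.univ.filter (fun v => ¬ f v ≤ 0) with hT
  have hsplit : ∀ g : Fin n → ℝ, ∑ i, g i = ∑ i ∈ S, g i + ∑ i ∈ T, g i := by
    intro g
    rw [hS, hT, Finset.sum_filter_add_sum_filter_not]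
  have hbig : ∑ b ∈ S, ∑ i, w i b * f i = ∑ b ∈ S, (∑ k, w b k) * f b :=
    Finset.sum_congr rfl fun b _ => heq b
  have hcross : ∑ b ∈ S, ∑ i ∈ T, w i b * f i = ∑ b ∈ S, ∑ k ∈ T, w b k * f b := by
    have e1 : ∑ b ∈ S, ∑ i, w i b * f i
        = ∑ b ∈ S, ∑ i ∈ S, w i b * f i + ∑ b ∈ S, ∑ i ∈ T, w i b * f i := by
      rw [← Finset.sum_add_distrib]
      exact Finset.sum_congr rfl fun b _ => hsplit _
    have e2 : ∑ b ∈ S, (∑ k, w b k) * f b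
        = ∑ b ∈ S, ∑ k ∈ S, w b k * f b + ∑ b ∈ S, ∑ k ∈ T, w b k * f b := by
      rw [← Finset.sum_add_distrib]
      refine Finset.sum_congr rfl fun b _ => ?_
      rw [hsplit (fun k => w b k), add_mul, Finset.sum_mul, Finset.sum_mul]
    have e3 : ∑ b ∈ S, ∑ i ∈ S, w i b * f i = ∑ b ∈ S, ∑ k ∈ S, w b k * f b :=
      Finset.sum_comm
    rw [e1, e2, e3] at hbig
    linarith
  have hLnn : 0 ≤ ∑ b ∈ S, ∑ i ∈ T, w i b * f i := by
    refine Finset.sum_nonneg fun b _ => Finset.sum_nonneg fun i hi => ?_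
    have : 0 < f i := lt_of_not_ge (Finset.mem_filter.mp hi).2
    exact mul_nonneg (hnn i b) this.le
  have hRnp : ∑ b ∈ S, ∑ k ∈ T, w b k * f b ≤ 0 := by
    refine Finset.sum_nonpos fun b hb => Finset.sum_nonpos fun k _ => ?_
    have : f b ≤ 0 := (Finset.mem_filter.mp hb).2
    exact mul_nonpos_of_nonneg_of_nonpos (hnn b k) this
  have hL0 : ∑ b ∈ S, ∑ i ∈ T, w i b * f i = 0 := le_antisymm (hcross ▸ hRnp) hLnn
  have hzero : ∀ b ∈ S, ∀ i ∈ T, w i b = 0 := by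
    intro b hb i hi
    have h1 := (Finset.sum_eq_zero_iff_of_nonneg
      (fun b _ => Finset.sum_nonneg fun i hi => mul_nonneg (hnn i b)
        (lt_of_not_ge (Finset.mem_filter.mp hi).2).le)).mp hL0 b hb
    have h2 := (Finset.sum_eq_zero_iff_of_nonneg
      (fun i hi => mul_nonneg (hnn i b)
        (lt_of_not_ge (Finset.mem_filter.mp hi).2).le)).mp h1 i hi
    have hfi : 0 < f i := lt_of_not_ge (Finset.mem_filter.mp hi).2
    exact by
      rcases mul_eq_zero.mp h2 with h | h
      · exact h
      · exact absurd h hfi.ne'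
  obtain ⟨p⟩ := hconn.preconnected i₀ j
  obtain ⟨d, _, hdf, hds⟩ := p.exists_boundary_dart {v | 0 < f v} h0 (by simpa using hj)
  have hadj := d.adj
  rw [SimpleGraph.fromRel_adj] at hadj
  obtain ⟨hne, hor⟩ := hadj
  have hfstT : d.fst ∈ T := Finset.mem_filter.mpr ⟨Finset.mem_univ _, not_le.mpr hdf⟩
  have hsndS : d.snd ∈ S := Finset.mem_filter.mpr ⟨Finset.mem_univ _, not_lt.mp hds⟩
  have hw1 : w d.fst d.snd = 0 := hzero _ hsndS _ hfstT
  rcases hor with h | h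
  · exact absurd hw1 h.ne'
  · exact absurd ((hsym d.snd d.fst hne.symm).mp h) (by rw [hw1]; exact lt_irrefl 0)

/-- If the two coordinate functions of `r : Fin n → ℝ × ℝ` lie in the left kernel of `A(w)`
and `r` is not identically zero, then all the vectors `r i` have the same direction. -/
theorem stmt_6 {n : ℕ} (hn : 2 ≤ n) (w : Fin n → Fin n → ℝ)
    (hw : IsConnPosWeight w) (r : Fin n → ℝ × ℝ)
    (hrx : (weightMatrix w)ᵀ *ᵥ (fun i => (r i).1) = 0)
    (hry : (weightMatrix w)ᵀ *ᵥ (fun i => (r i).2) = 0)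
    (hr0 : r ≠ 0) :
    ∀ i j, 0 < inner2 (r i) (r j) := by
  have hker : ∀ c d : ℝ, (weightMatrix w)ᵀ *ᵥ (fun v => c * (r v).1 + d * (r v).2) = 0 := by
    intro c d
    have he : (fun v => c * (r v).1 + d * (r v).2)
        = c • (fun i => (r i).1) + d • (fun i => (r i).2) := rfl
    rw [he, Matrix.mulVec_add, Matrix.mulVec_smul, Matrix.mulVec_smul, hrx, hry]
    simp
  have hpos : ∀ i, r i ≠ 0 → ∀ j, 0 < inner2 (r i) (r j) := by
    intro i hi j
    have hii : 0 < (r i).1 * (r i).1 + (r i).2 * (r i).2 := by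
      have h1 : (r i).1 ≠ 0 ∨ (r i).2 ≠ 0 := by
        by_contra hc
        push_neg at hc
        exact hi (Prod.ext hc.1 hc.2)
      rcases h1 with h1 | h1
      · nlinarith [mul_self_nonneg (r i).2, mul_self_pos.mpr h1]
      · nlinarith [mul_self_nonneg (r i).1, mul_self_pos.mpr h1]
    exact key_pos hw (hker (r i).1 (r i).2) (i₀ := i) hii j
  obtain ⟨i₀, hi₀⟩ := Function.ne_iff.mp hr0
  intro i j
  have hri : r i ≠ 0 := by
    intro h
    have := hpos i₀ hi₀ i
    rw [h] at this
    simp [inner2] at this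
  exact hpos i hri j
end

section
/- Let w be a connected positive weight on n vertices and A(w) its weight matrix, and let C(w) be the maximum of w i j / w j i over all ordered pairs (i, j) with w i j > 0. Suppose r : Fin n → ℝ satisfies (A(w))ᵀ *ᵥ r = 0 and r i > 0 for every i. Then for every nonempty proper subset S of Fin n, the minimum of r over S is at most C(w) times the maximum of r over the complement of S. -/
open Matrix Finset

/-- For a positive left-kernel vector `r` of `A(w)`, on every nonempty proper subset `S`
of the vertices, the minimum of `r` over `S` is at most `C(w)` times the maximum of `r`
over the complement of `S`, where `C(w)` is the maximum of `w i j / w j i` over pairs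
with `w i j > 0`. -/
theorem stmt_7 {n : ℕ} (hn : 2 ≤ n) (w : Fin n → Fin n → ℝ)
    (hw : IsConnPosWeight w) (C : ℝ)
    (hC₁ : ∀ i j, 0 < w i j → w i j / w j i ≤ C)
    (hC₂ : ∃ i j, 0 < w i j ∧ C = w i j / w j i)
    (r : Fin n → ℝ) (hr : (weightMatrix w)ᵀ *ᵥ r = 0) (hrpos : ∀ i, 0 < r i)
    (S : Set (Fin n)) (hS : S.Nonempty) (hS' : S ≠ Set.univ) :
    sInf (r '' S) ≤ C * sSup (r '' Sᶜ) := by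
  obtain ⟨hw0, hwnn, hwsym, hwconn⟩ := hw
  -- C is positive
  have hCpos : 0 < C := by
    obtain ⟨i, j, hij, hCeq⟩ := hC₂
    have hne : i ≠ j := by rintro rfl; rw [hw0] at hij; exact lt_irrefl 0 hij
    have hji : 0 < w j i := (hwsym i j hne).mp hij
    rw [hCeq]; positivity
  have hwle : ∀ i j, w i j ≤ C * w j i := by
    intro i j
    rcases eq_or_lt_of_le (hwnn i j) with h | h
    · rw [← h]; exact mul_nonneg hCpos.le (hwnn j i)
    · have hne : i ≠ j := by rintro rfl; rw [hw0] at h; exact lt_irrefl 0 h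
      have hji : 0 < w j i := (hwsym i j hne).mp h
      have hd := hC₁ i j h
      calc w i j = (w i j / w j i) * w j i := by field_simp
        _ ≤ C * w j i := mul_le_mul_of_nonneg_right hd hji.le
  -- kernel equation
  have hker : ∀ j, ∑ i, w i j * r i = (∑ k, w j k) * r j := by
    intro j
    have h0 := congrFun hr j
    simp only [Matrix.mulVec, dotProduct, Matrix.transpose_apply, weightMatrix,
      Matrix.of_apply, Pi.zero_apply] at h0
    rw [← Finset.sum_erase_add _ _ (Finset.mem_univ j), if_pos rfl] at h0
    have e1 : ∑ i ∈ Finset.univ.erase j,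
        (if i = j then -(∑ k ∈ Finset.univ.erase i, w i k) else w i j) * r i
        = ∑ i ∈ Finset.univ.erase j, w i j * r i :=
      Finset.sum_congr rfl fun i hi => by rw [if_neg (Finset.mem_erase.mp hi).1]
    rw [e1] at h0
    have e2 : ∑ i ∈ Finset.univ.erase j, w i j * r i = ∑ i, w i j * r i :=
      Finset.sum_erase _ (by rw [hw0]; ring)
    have e3 : ∑ k ∈ Finset.univ.erase j, w j k = ∑ k, w j k :=
      Finset.sum_erase _ (hw0 j)
    rw [e2, e3] at h0
    linarith
  haveI : Fintype ↥S := Fintype.ofFinite _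
  set T : Finset (Fin n) := S.toFinset with hT
  have hmemT : ∀ i, i ∈ T ↔ i ∈ S := fun i => Set.mem_toFinset
  -- cut balance equation
  have hcut : ∑ j ∈ T, ∑ i ∈ Tᶜ, w i j * r i = ∑ j ∈ T, ∑ k ∈ Tᶜ, w j k * r j := by
    have h1 : ∑ j ∈ T, ∑ i, w i j * r i = ∑ j ∈ T, ∑ k, w j k * r j := by
      refine Finset.sum_congr rfl fun j _ => ?_
      rw [hker j, Finset.sum_mul]
    have h2 : ∀ (f : Fin n → Fin n → ℝ), ∑ j ∈ T, ∑ i, f j i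
        = ∑ j ∈ T, ∑ i ∈ T, f j i + ∑ j ∈ T, ∑ i ∈ Tᶜ, f j i := by
      intro f
      rw [← Finset.sum_add_distrib]
      exact Finset.sum_congr rfl fun j _ => (Finset.sum_add_sum_compl T _).symm
    rw [h2 (fun j i => w i j * r i), h2 (fun j k => w j k * r j)] at h1
    have h3 : ∑ j ∈ T, ∑ i ∈ T, w i j * r i = ∑ j ∈ T, ∑ i ∈ T, w j i * r j :=
      Finset.sum_comm
    rw [h3] at h1
    exact add_left_cancel h1
  -- boundary edge exists
  obtain ⟨a, ha⟩ := hS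
  obtain ⟨b, hb⟩ : ∃ b, b ∉ S := by
    by_contra h
    push_neg at h
    exact hS' (Set.eq_univ_of_forall h)
  obtain ⟨p⟩ := hwconn.preconnected a b
  obtain ⟨d, _, hd1, hd2⟩ := p.exists_boundary_dart S ha hb
  have hadj := d.adj
  rw [SimpleGraph.fromRel_adj] at hadj
  have hxy : 0 < w d.fst d.snd := by
    rcases hadj.2 with h | h
    · exact h
    · exact (hwsym d.snd d.fst hadj.1.symm).mp h
  -- W > 0
  set W : ℝ := ∑ j ∈ T, ∑ k ∈ Tᶜ, w j k with hW
  have hWpos : 0 < W := by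
    rw [hW, ← Finset.sum_product']
    refine Finset.sum_pos' (fun p _ => hwnn p.1 p.2) ⟨(d.fst, d.snd), ?_, hxy⟩
    rw [Finset.mem_product, Finset.mem_compl, hmemT, hmemT]
    exact ⟨hd1, hd2⟩
  -- min and max facts
  set m : ℝ := sInf (r '' S) with hm
  set M : ℝ := sSup (r '' Sᶜ) with hM
  have hmle : ∀ j ∈ T, m ≤ r j := fun j hj =>
    csInf_le (Set.Finite.bddBelow (S.toFinite.image r)) ⟨j, (hmemT j).mp hj, rfl⟩
  have hMle : ∀ i ∈ Tᶜ, r i ≤ M := fun i hi =>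
    le_csSup (Set.Finite.bddAbove (Sᶜ.toFinite.image r))
      ⟨i, (hmemT i).not.mp (Finset.mem_compl.mp hi), rfl⟩
  have hMpos : 0 < M := lt_of_lt_of_le (hrpos b) (hMle b (Finset.mem_compl.mpr ((hmemT b).not.mpr hb)))
  -- main chain
  have h1 : m * W ≤ ∑ j ∈ T, ∑ k ∈ Tᶜ, w j k * r j := by
    rw [hW, Finset.mul_sum]
    refine Finset.sum_le_sum fun j hj => ?_
    rw [Finset.mul_sum]
    refine Finset.sum_le_sum fun k _ => ?_
    calc m * w j k = w j k * m := by ring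
      _ ≤ w j k * r j := mul_le_mul_of_nonneg_left (hmle j hj) (hwnn j k)
  have h2 : ∑ j ∈ T, ∑ i ∈ Tᶜ, w i j * r i ≤ C * M * W := by
    rw [hW, Finset.mul_sum]
    refine Finset.sum_le_sum fun j hj => ?_
    rw [Finset.mul_sum]
    refine Finset.sum_le_sum fun i hi => ?_
    calc w i j * r i ≤ w i j * M := mul_le_mul_of_nonneg_left (hMle i hi) (hwnn i j)
      _ ≤ (C * w j i) * M := mul_le_mul_of_nonneg_right (hwle i j) hMpos.le
      _ = C * M * w j i := by ring
  have hfinal : m * W ≤ C * M * W := le_trans h1 (hcut ▸ h2)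
  exact le_of_mul_le_mul_right hfinal hWpos
end

section
/- Let w be a connected positive weight on n vertices and A(w) its weight matrix, and let C(w) be the maximum of w i j / w j i over all ordered pairs (i, j) with w i j > 0. Let r : Fin n → ℝ × ℝ satisfy (A(w))ᵀ *ᵥ rˣ = 0 and (A(w))ᵀ *ᵥ rʸ = 0, where rˣ, rʸ are the two coordinate functions of r, and suppose r is not identically zero. Then for all i, j ∈ Fin n, the Euclidean norms satisfy ‖r i‖ ≤ C(w)^(n−1) · ‖r j‖. -/
open Matrix Finset

/-- The Euclidean norm on `ℝ × ℝ`. -/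
noncomputable def norm2 (a : ℝ × ℝ) : ℝ := Real.sqrt (a.1 ^ 2 + a.2 ^ 2)

lemma cut_balance {n : ℕ} (w : Fin n → Fin n → ℝ) (hdiag : ∀ i, w i i = 0)
    (x : Fin n → ℝ) (hx : (weightMatrix w)ᵀ *ᵥ x = 0) (S : Finset (Fin n)) :
    ∑ j ∈ S, ∑ i ∈ Sᶜ, w j i * x j = ∑ j ∈ S, ∑ i ∈ Sᶜ, w i j * x i := by
  have key : ∀ j, ∑ i, w i j * x i = ∑ i, w j i * x j := by
    intro j
    have h0 : ((weightMatrix w)ᵀ *ᵥ x) j = 0 := by rw [hx]; rfl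
    simp only [Matrix.mulVec, Matrix.transpose_apply, dotProduct, weightMatrix,
      Matrix.of_apply] at h0
    rw [← Finset.sum_erase_add _ _ (Finset.mem_univ j)] at h0
    rw [Finset.sum_congr rfl (fun i hi => by
      rw [if_neg (Finset.ne_of_mem_erase hi)])] at h0
    simp only [if_true] at h0
    have e1 : ∑ i, w i j * x i = ∑ i ∈ Finset.univ.erase j, w i j * x i := by
      rw [← Finset.sum_erase_add _ _ (Finset.mem_univ j), hdiag j]; ring
    have e2 : ∑ i, w j i * x j = ∑ i ∈ Finset.univ.erase j, w j i * x j := by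
      rw [← Finset.sum_erase_add _ _ (Finset.mem_univ j), hdiag j]; ring
    rw [e1, e2, ← Finset.sum_mul]
    linarith
  have hsplit : ∀ (f : Fin n → Fin n → ℝ) (j : Fin n),
      ∑ i, f j i = ∑ i ∈ S, f j i + ∑ i ∈ Sᶜ, f j i := by
    intro f j
    rw [Finset.sum_add_sum_compl]
  have h1 : ∑ j ∈ S, ∑ i, w i j * x i = ∑ j ∈ S, ∑ i, w j i * x j :=
    Finset.sum_congr rfl fun j _ => key j
  rw [Finset.sum_congr rfl (fun j _ => hsplit (fun j i => w i j * x i) j),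
      Finset.sum_congr rfl (fun j _ => hsplit (fun j i => w j i * x j) j),
      Finset.sum_add_distrib, Finset.sum_add_distrib] at h1
  have hsym : ∑ j ∈ S, ∑ i ∈ S, w i j * x i = ∑ j ∈ S, ∑ i ∈ S, w j i * x j :=
    Finset.sum_comm
  linarith

lemma crossing_edge {n : ℕ} {w : Fin n → Fin n → ℝ} (hw : IsConnPosWeight w)
    (S : Finset (Fin n)) (hS : S.Nonempty) (hSc : Sᶜ.Nonempty) :
    ∃ j ∈ S, ∃ i ∈ Sᶜ, 0 < w j i ∧ 0 < w i j := by
  obtain ⟨u, hu⟩ := hS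
  obtain ⟨v, hv⟩ := hSc
  obtain ⟨p⟩ := hw.2.2.2.preconnected u v
  have hv' : v ∉ (↑S : Set (Fin n)) := by simpa using (Finset.mem_compl.mp hv)
  obtain ⟨d, _, hd1, hd2⟩ := p.exists_boundary_dart (↑S : Set (Fin n)) (by simpa using hu) hv'
  have hadj := d.adj
  rw [SimpleGraph.fromRel_adj] at hadj
  obtain ⟨hne, hor⟩ := hadj
  have hboth : 0 < w d.toProd.1 d.toProd.2 ∧ 0 < w d.toProd.2 d.toProd.1 := by
    rcases hor with h | h
    · exact ⟨h, (hw.2.2.1 _ _ hne).mp h⟩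
    · exact ⟨(hw.2.2.1 _ _ hne.symm).mp h, h⟩
  exact ⟨d.toProd.1, by simpa using hd1, d.toProd.2, by simpa using hd2, hboth.1, hboth.2⟩

lemma sign_lemma {n : ℕ} {w : Fin n → Fin n → ℝ} (hw : IsConnPosWeight w)
    (x : Fin n → ℝ) (hx : (weightMatrix w)ᵀ *ᵥ x = 0) :
    (∀ i, x i ≤ 0) ∨ (∀ i, 0 < x i) := by
  set S : Finset (Fin n) := Finset.univ.filter (fun i => 0 < x i) with hSdef
  by_cases hS : S = Finset.univ
  · right; intro i
    have : i ∈ S := hS ▸ Finset.mem_univ i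
    simpa [hSdef] using this
  · left
    by_contra hcon
    push_neg at hcon
    obtain ⟨i0, hi0⟩ := hcon
    have hSne : S.Nonempty := ⟨i0, by simp [hSdef]; linarith⟩
    have hScne : Sᶜ.Nonempty := by
      by_contra hc
      rw [Finset.not_nonempty_iff_eq_empty, Finset.compl_eq_empty_iff] at hc
      exact hS hc
    obtain ⟨j, hj, i, hi, hji, hij⟩ := crossing_edge hw S hSne hScne
    have hcb := cut_balance w hw.1 x hx S
    have hL : 0 < ∑ j ∈ S, ∑ i ∈ Sᶜ, w j i * x j := by
      apply Finset.sum_pos' -- nonneg + one strict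
      · intro a ha
        apply Finset.sum_nonneg
        intro b _
        have hxa : 0 < x a := by simpa [hSdef] using ha
        exact mul_nonneg (hw.2.1 a b) hxa.le
      · refine ⟨j, hj, ?_⟩
        apply Finset.sum_pos'
        · intro b _
          have hxj : 0 < x j := by simpa [hSdef] using hj
          exact mul_nonneg (hw.2.1 j b) hxj.le
        · refine ⟨i, hi, ?_⟩
          have hxj : 0 < x j := by simpa [hSdef] using hj
          exact mul_pos hji hxj
    have hR : ∑ j ∈ S, ∑ i ∈ Sᶜ, w i j * x i ≤ 0 := by
      apply Finset.sum_nonpos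
      intro a _
      apply Finset.sum_nonpos
      intro b hb
      have hxb : x b ≤ 0 := by
        have := Finset.mem_compl.mp hb
        simp [hSdef] at this
        linarith
      exact mul_nonpos_of_nonneg_of_nonpos (hw.2.1 b a) hxb
    linarith

lemma C_ge_one {n : ℕ} {w : Fin n → Fin n → ℝ} (hw : IsConnPosWeight w) {C : ℝ}
    (hC₁ : ∀ i j, 0 < w i j → w i j / w j i ≤ C)
    (hC₂ : ∃ i j, 0 < w i j ∧ C = w i j / w j i) : 1 ≤ C := by
  obtain ⟨i, j, hij, hC⟩ := hC₂
  have hne : i ≠ j := by rintro rfl; rw [hw.1 i] at hij; linarith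
  have hji : 0 < w j i := (hw.2.2.1 i j hne).mp hij
  have h1 := hC₁ j i hji
  have : C = w i j / w j i := hC
  rw [this] at h1 ⊢
  rw [div_le_div_iff₀ hij hji] at h1
  rw [le_div_iff₀ hji]
  nlinarith

lemma cut_step {n : ℕ} {w : Fin n → Fin n → ℝ} (hw : IsConnPosWeight w) {C : ℝ}
    (hC₁ : ∀ i j, 0 < w i j → w i j / w j i ≤ C) (hC : 1 ≤ C)
    (x : Fin n → ℝ) (hx : (weightMatrix w)ᵀ *ᵥ x = 0) (hpos : ∀ i, 0 < x i)
    (S : Finset (Fin n)) (hS : S.Nonempty) (hSu : S ≠ Finset.univ)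
    (M : ℝ) (hM0 : 0 ≤ M) (hM : ∀ j ∈ S, x j ≤ M) :
    ∃ i ∈ Sᶜ, x i ≤ C * M := by
  by_contra hc
  push_neg at hc
  have hScne : Sᶜ.Nonempty := by
    by_contra hcc
    rw [Finset.not_nonempty_iff_eq_empty, Finset.compl_eq_empty_iff] at hcc
    exact hSu hcc
  obtain ⟨j0, hj0, i0, hi0, hji0, hij0⟩ := crossing_edge hw S hS hScne
  have hcb := cut_balance w hw.1 x hx S
  have hterm : ∀ j ∈ S, ∀ i ∈ Sᶜ, w j i * x j ≤ w i j * x i := by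
    intro j hj i hi
    have h1 : x j ≤ M := hM j hj
    have h2 : C * M < x i := hc i hi
    rcases eq_or_lt_of_le (hw.2.1 j i) with h | h
    · have : w j i * x j = 0 := by rw [← h]; ring
      rw [this]
      exact mul_nonneg (hw.2.1 i j) (hpos i).le
    · have hne : j ≠ i := by
        intro e; subst e; exact absurd hj (Finset.mem_compl.mp hi)
      have hij : 0 < w i j := (hw.2.2.1 j i hne).mp h
      have hwle : w j i ≤ C * w i j := by
        have := hC₁ j i h
        rwa [div_le_iff₀ hij] at this
      calc w j i * x j ≤ w j i * M := mul_le_mul_of_nonneg_left h1 h.le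
        _ ≤ (C * w i j) * M := mul_le_mul_of_nonneg_right hwle hM0
        _ = w i j * (C * M) := by ring
        _ ≤ w i j * x i := mul_le_mul_of_nonneg_left h2.le hij.le
  have hstrict : ∑ j ∈ S, ∑ i ∈ Sᶜ, w j i * x j < ∑ j ∈ S, ∑ i ∈ Sᶜ, w i j * x i := by
    rw [← Finset.sum_product' (f := fun j i => w j i * x j),
        ← Finset.sum_product' (f := fun j i => w i j * x i)]
    apply Finset.sum_lt_sum
    · intro p hp
      obtain ⟨hp1, hp2⟩ := Finset.mem_product.mp hp
      exact hterm _ hp1 _ hp2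
    · refine ⟨(j0, i0), Finset.mem_product.mpr ⟨hj0, hi0⟩, ?_⟩
      have h1 : x j0 ≤ M := hM j0 hj0
      have h2 : C * M < x i0 := hc i0 hi0
      have hwle : w j0 i0 ≤ C * w i0 j0 := by
        have := hC₁ j0 i0 hji0
        rwa [div_le_iff₀ hij0] at this
      calc w j0 i0 * x j0 ≤ w j0 i0 * M := mul_le_mul_of_nonneg_left h1 hji0.le
        _ ≤ (C * w i0 j0) * M := mul_le_mul_of_nonneg_right hwle hM0
        _ = w i0 j0 * (C * M) := by ring
        _ < w i0 j0 * x i0 := by exact mul_lt_mul_of_pos_left h2 hij0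
  linarith

lemma main_scalar {n : ℕ} (hn : 2 ≤ n) {w : Fin n → Fin n → ℝ} (hw : IsConnPosWeight w)
    {C : ℝ} (hC₁ : ∀ i j, 0 < w i j → w i j / w j i ≤ C) (hC : 1 ≤ C)
    (x : Fin n → ℝ) (hx : (weightMatrix w)ᵀ *ᵥ x = 0) (hpos : ∀ i, 0 < x i) :
    ∀ i j, x i ≤ C ^ (n - 1) * x j := by
  have hnpos : 0 < n := by omega
  have : NeZero n := ⟨by omega⟩
  obtain ⟨i₀, -, hmin⟩ := Finset.exists_min_image Finset.univ x Finset.univ_nonempty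
  have key : ∀ k : ℕ, k < n →
      ∃ S : Finset (Fin n), S.card = k + 1 ∧ ∀ j ∈ S, x j ≤ C ^ k * x i₀ := by
    intro k
    induction k with
    | zero =>
      intro _
      refine ⟨{i₀}, by simp, ?_⟩
      intro j hj
      rw [Finset.mem_singleton] at hj
      subst hj
      simp
    | succ m ih =>
      intro hk
      obtain ⟨S, hcard, hbound⟩ := ih (by omega)
      have hSne : S.Nonempty := Finset.card_pos.mp (by omega)
      have hSu : S ≠ Finset.univ := by
        intro h
        rw [h, Finset.card_univ, Fintype.card_fin] at hcard
        omega
      have hM0 : 0 ≤ C ^ m * x i₀ :=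
        mul_nonneg (pow_nonneg (by linarith) m) (hpos i₀).le
      obtain ⟨i, hi, hxi⟩ := cut_step hw hC₁ hC x hx hpos S hSne hSu _ hM0 hbound
      refine ⟨insert i S, ?_, ?_⟩
      · rw [Finset.card_insert_of_notMem (Finset.mem_compl.mp hi), hcard]
      · intro j hj
        rcases Finset.mem_insert.mp hj with rfl | hjS
        · calc x j ≤ C * (C ^ m * x i₀) := hxi
            _ = C ^ (m + 1) * x i₀ := by ring
        · calc x j ≤ C ^ m * x i₀ := hbound j hjS
            _ ≤ C ^ (m + 1) * x i₀ := by
              have hp : C ^ m ≤ C ^ (m + 1) := pow_le_pow_right₀ hC (by omega)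
              nlinarith [hpos i₀]
  obtain ⟨S, hcard, hbound⟩ := key (n - 1) (by omega)
  have hSu : S = Finset.univ := Finset.eq_univ_of_card S (by rw [hcard, Fintype.card_fin]; omega)
  intro i j
  have h1 : x i ≤ C ^ (n - 1) * x i₀ := hbound i (hSu ▸ Finset.mem_univ i)
  have h2 : x i₀ ≤ x j := hmin j (Finset.mem_univ j)
  have h3 : (0:ℝ) ≤ C ^ (n - 1) := pow_nonneg (by linarith) _
  nlinarith

lemma scalar_abs {n : ℕ} (hn : 2 ≤ n) {w : Fin n → Fin n → ℝ} (hw : IsConnPosWeight w)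
    {C : ℝ} (hC₁ : ∀ i j, 0 < w i j → w i j / w j i ≤ C)
    (hC₂ : ∃ i j, 0 < w i j ∧ C = w i j / w j i)
    (x : Fin n → ℝ) (hx : (weightMatrix w)ᵀ *ᵥ x = 0) :
    ∀ i j, |x i| ≤ C ^ (n - 1) * |x j| := by
  have hC : 1 ≤ C := C_ge_one hw hC₁ hC₂
  have hxneg : (weightMatrix w)ᵀ *ᵥ (-x) = 0 := by
    rw [Matrix.mulVec_neg, hx, neg_zero]
  rcases sign_lemma hw x hx with h1 | h1
  · rcases sign_lemma hw (-x) hxneg with h2 | h2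
    · intro i j
      have hzi : x i = 0 := le_antisymm (h1 i) (by have := h2 i; simp at this; linarith)
      have hzj : x j = 0 := le_antisymm (h1 j) (by have := h2 j; simp at this; linarith)
      simp [hzi, hzj]
    · intro i j
      have hm := main_scalar hn hw hC₁ hC (-x) hxneg h2 i j
      simp only [Pi.neg_apply] at hm
      have hxi : x i ≤ 0 := h1 i
      have hxj : x j ≤ 0 := h1 j
      rw [abs_of_nonpos hxi, abs_of_nonpos hxj]
      linarith
  · intro i j
    have hm := main_scalar hn hw hC₁ hC x hx h1 i j
    rw [abs_of_pos (h1 i), abs_of_pos (h1 j)]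
    exact hm

/-- If the coordinate functions of a not-identically-zero `r : Fin n → ℝ × ℝ` lie in the
left kernel of `A(w)`, then the norms of the `r i` are comparable with ratio at most
`C(w)^(n-1)`. -/
theorem stmt_8 {n : ℕ} (hn : 2 ≤ n) (w : Fin n → Fin n → ℝ)
    (hw : IsConnPosWeight w) (C : ℝ)
    (hC₁ : ∀ i j, 0 < w i j → w i j / w j i ≤ C)
    (hC₂ : ∃ i j, 0 < w i j ∧ C = w i j / w j i)
    (r : Fin n → ℝ × ℝ)
    (hrx : (weightMatrix w)ᵀ *ᵥ (fun i => (r i).1) = 0)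
    (hry : (weightMatrix w)ᵀ *ᵥ (fun i => (r i).2) = 0)
    (hr0 : r ≠ 0) :
    ∀ i j, norm2 (r i) ≤ C ^ (n - 1) * norm2 (r j) := by
  intro i j
  have hx := scalar_abs hn hw hC₁ hC₂ _ hrx i j
  have hy := scalar_abs hn hw hC₁ hC₂ _ hry i j
  have hC : 1 ≤ C := C_ge_one hw hC₁ hC₂
  have hCp : (0:ℝ) ≤ C ^ (n - 1) := pow_nonneg (by linarith) _
  unfold norm2
  have h1 : (r i).1 ^ 2 + (r i).2 ^ 2 ≤
      (C ^ (n - 1)) ^ 2 * ((r j).1 ^ 2 + (r j).2 ^ 2) := by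
    nlinarith [sq_abs ((r i).1), sq_abs ((r j).1), sq_abs ((r i).2), sq_abs ((r j).2),
      abs_nonneg ((r i).1), abs_nonneg ((r j).1), abs_nonneg ((r i).2), abs_nonneg ((r j).2),
      mul_self_le_mul_self (abs_nonneg ((r i).1)) hx,
      mul_self_le_mul_self (abs_nonneg ((r i).2)) hy]
  calc Real.sqrt ((r i).1 ^ 2 + (r i).2 ^ 2)
      ≤ Real.sqrt ((C ^ (n - 1)) ^ 2 * ((r j).1 ^ 2 + (r j).2 ^ 2)) := Real.sqrt_le_sqrt h1
    _ = C ^ (n - 1) * Real.sqrt ((r j).1 ^ 2 + (r j).2 ^ 2) := by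
        rw [Real.sqrt_mul (by positivity), Real.sqrt_sq hCp]
end

section
/- Let w be a connected positive weight on n vertices and A(w) its weight matrix. Then there exists a vector r : Fin n → ℝ with r i > 0 for every i ∈ Fin n such that (A(w))ᵀ *ᵥ r = 0. -/
open Matrix Finset

private lemma wm_tvec {n : ℕ} (w : Fin n → Fin n → ℝ) (hww : ∀ i, w i i = 0)
    (v : Fin n → ℝ) (j : Fin n) :
    ((weightMatrix w)ᵀ *ᵥ v) j = (∑ i, w i j * v i) - (∑ k, w j k) * v j := by
  simp only [Matrix.mulVec, Matrix.transpose_apply, dotProduct, weightMatrix, Matrix.of_apply]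
  have hsum : ∑ k ∈ Finset.univ.erase j, w j k = ∑ k, w j k :=
    Finset.sum_erase _ (hww j)
  have key : ∀ i : Fin n,
      (if i = j then -(∑ k ∈ Finset.univ.erase i, w i k) else w i j) * v i
        = w i j * v i - (if i = j then (∑ k, w j k) * v j else 0) := by
    intro i
    by_cases h : i = j
    · subst h
      rw [if_pos rfl, if_pos rfl, hww i, hsum]
      ring
    · rw [if_neg h, if_neg h]
      ring
  rw [Finset.sum_congr rfl fun i _ => key i, Finset.sum_sub_distrib,
    Finset.sum_ite_eq' Finset.univ j fun _ => (∑ k, w j k) * v j]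
  simp

private lemma wm_vec {n : ℕ} (w : Fin n → Fin n → ℝ) (hww : ∀ i, w i i = 0)
    (v : Fin n → ℝ) (i : Fin n) :
    ((weightMatrix w) *ᵥ v) i = (∑ j, w i j * v j) - (∑ k, w i k) * v i := by
  simp only [Matrix.mulVec, dotProduct, weightMatrix, Matrix.of_apply]
  have hsum : ∑ k ∈ Finset.univ.erase i, w i k = ∑ k, w i k :=
    Finset.sum_erase _ (hww i)
  have key : ∀ j : Fin n,
      (if i = j then -(∑ k ∈ Finset.univ.erase i, w i k) else w i j) * v j
        = w i j * v j - (if j = i then (∑ k, w i k) * v i else 0) := by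
    intro j
    by_cases h : j = i
    · subst h
      rw [if_pos rfl, if_pos rfl, hww j, hsum]
      ring
    · rw [if_neg (Ne.symm h), if_neg h]
      ring
  rw [Finset.sum_congr rfl fun j _ => key j, Finset.sum_sub_distrib,
    Finset.sum_ite_eq' Finset.univ i fun _ => (∑ k, w i k) * v i]
  simp

/-- The left kernel of the weight matrix of a connected positive weight contains a vector
with all entries positive. -/
theorem stmt_9 {n : ℕ} (hn : 2 ≤ n) (w : Fin n → Fin n → ℝ)
    (hw : IsConnPosWeight w) :
    ∃ r : Fin n → ℝ, (∀ i, 0 < r i) ∧ (weightMatrix w)ᵀ *ᵥ r = 0 := by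
  obtain ⟨hww, hwnn, hwsym, hconn⟩ := hw
  haveI : NeZero n := ⟨by omega⟩
  -- the matrix is singular
  have hdet : (weightMatrix w)ᵀ.det = 0 := by
    rw [Matrix.det_transpose, ← Matrix.exists_mulVec_eq_zero_iff]
    refine ⟨fun _ => 1, ?_, ?_⟩
    · intro h
      have := congrFun h 0
      simp at this
    · funext i
      rw [wm_vec w hww]
      simp
  obtain ⟨r, hr0, hrk⟩ := (Matrix.exists_mulVec_eq_zero_iff).2 hdet
  set s : Fin n → ℝ := fun i => |r i| with hs
  -- kernel equation for r
  have hker : ∀ j, ∑ i, w i j * r i = (∑ k, w j k) * r j := by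
    intro j
    have := congrFun hrk j
    rw [wm_tvec w hww, Pi.zero_apply] at this
    linarith [this]
  -- the "defect" at each vertex is nonneg and sums to zero, hence zero
  have hstar : ∀ j, ∑ i, w i j * s i = (∑ k, w j k) * s j := by
    have hnn : ∀ j ∈ Finset.univ, 0 ≤ (∑ i, w i j * s i) - (∑ k, w j k) * s j := by
      intro j _
      have h1 : (∑ k, w j k) * s j = |(∑ k, w j k) * r j| := by
        rw [abs_mul, abs_of_nonneg (Finset.sum_nonneg fun k _ => hwnn j k)]
      have h2 : |(∑ k, w j k) * r j| ≤ ∑ i, w i j * s i := by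
        rw [← hker j]
        calc |∑ i, w i j * r i| ≤ ∑ i, |w i j * r i| := Finset.abs_sum_le_sum_abs _ _
          _ = ∑ i, w i j * s i := by
              refine Finset.sum_congr rfl fun i _ => ?_
              rw [abs_mul, abs_of_nonneg (hwnn i j)]
      linarith [h1 ▸ h2]
    have hsum : ∑ j, ((∑ i, w i j * s i) - (∑ k, w j k) * s j) = 0 := by
      rw [Finset.sum_sub_distrib]
      rw [Finset.sum_comm]
      simp only [← Finset.sum_mul]
      ring
    intro j
    have := (Finset.sum_eq_zero_iff_of_nonneg hnn).1 hsum j (Finset.mem_univ j)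
    linarith [this]
  -- propagation of zeros along edges
  have hprop : ∀ a b : Fin n, (SimpleGraph.fromRel fun i j : Fin n => 0 < w i j).Adj a b →
      s a = 0 → s b = 0 := by
    intro a b hab hsa
    obtain ⟨hne, hor⟩ := hab
    have hwba : 0 < w b a := by
      rcases hor with h | h
      · exact (hwsym a b hne).1 h
      · exact h
    have h0 : ∑ i, w i a * s i = 0 := by rw [hstar a, hsa, mul_zero]
    have h1 : ∀ i ∈ Finset.univ, 0 ≤ w i a * s i :=
      fun i _ => mul_nonneg (hwnn i a) (abs_nonneg _)
    have := (Finset.sum_eq_zero_iff_of_nonneg h1).1 h0 b (Finset.mem_univ b)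
    rcases mul_eq_zero.1 this with h | h
    · exact absurd h (ne_of_gt hwba)
    · exact h
  -- s is positive everywhere
  have hspos : ∀ j, 0 < s j := by
    have hsne : ∃ i0, s i0 ≠ 0 := by
      by_contra h
      push_neg at h
      exact hr0 (funext fun i => abs_eq_zero.1 (h i))
    obtain ⟨i0, hi0⟩ := hsne
    intro j
    rcases lt_or_eq_of_le (abs_nonneg (r j)) with h | h
    · exact h
    · exfalso
      obtain ⟨p⟩ := hconn.preconnected j i0
      have hwalk : ∀ {a b : Fin n}
          (p : (SimpleGraph.fromRel fun i j : Fin n => 0 < w i j).Walk a b),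
          s a = 0 → s b = 0 := by
        intro a b p
        induction p with
        | nil => exact id
        | cons hadj p ih => exact fun ha => ih (hprop _ _ hadj ha)
      exact hi0 (hwalk p h.symm)
  refine ⟨s, hspos, ?_⟩
  funext j
  rw [wm_tvec w hww, hstar j]
  simp
end

section
/- Let ν ∈ ℝ × ℝ be a unit vector, let k, m ≥ 1 be integers, and let d : Fin k → ℝ × ℝ and e : Fin m → ℝ × ℝ be finite families of plane vectors with Σ_i d i = (1, 0) and Σ_j e j = (0, 1). Then either there exists i ∈ Fin k with |⟨ν, d i⟩| ≥ 1/(√2 · k), or there exists j ∈ Fin m with |⟨ν, e j⟩| ≥ 1/(√2 · m), where ⟨·,·⟩ is the Euclidean inner product on ℝ × ℝ. -/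
open Finset

lemma aux_pigeon {n : ℕ} (hn : 1 ≤ n) (f : Fin n → ℝ) (c : ℝ)
    (h : c ≤ |∑ i, f i|) : ∃ i, c / n ≤ |f i| := by
  by_contra hcon
  push_neg at hcon
  have hne : (Finset.univ : Finset (Fin n)).Nonempty := by
    simpa [Finset.univ_nonempty_iff] using Fin.pos_iff_nonempty.mp hn
  have h1 : |∑ i, f i| ≤ ∑ i, |f i| := Finset.abs_sum_le_sum_abs _ _
  have h2 : ∑ i, |f i| < ∑ _i : Fin n, c / n :=
    Finset.sum_lt_sum_of_nonempty hne fun i _ => hcon i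
  have h3 : ∑ _i : Fin n, c / n = c := by
    rw [Finset.sum_const, Finset.card_univ, Fintype.card_fin, nsmul_eq_mul]
    field_simp
  linarith

lemma aux_inner_sum {n : ℕ} (ν : ℝ × ℝ) (f : Fin n → ℝ × ℝ) :
    ∑ i, inner2 ν (f i) = inner2 ν (∑ i, f i) := by
  simp [inner2, Prod.fst_sum, Prod.snd_sum, Finset.mul_sum, Finset.sum_add_distrib]

/-- If `ν` is a Euclidean unit vector in the plane, and `d`, `e` are finite families of plane
vectors summing to `(1,0)` and `(0,1)` respectively, then some `d i` has
`|⟨ν, d i⟩| ≥ 1/(√2 k)` or some `e j` has `|⟨ν, e j⟩| ≥ 1/(√2 m)`. -/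
theorem stmt_10 (ν : ℝ × ℝ) (hν : norm2 ν = 1) (k m : ℕ) (hk : 1 ≤ k) (hm : 1 ≤ m)
    (d : Fin k → ℝ × ℝ) (e : Fin m → ℝ × ℝ)
    (hd : ∑ i, d i = (1, 0)) (he : ∑ j, e j = (0, 1)) :
    (∃ i, 1 / (Real.sqrt 2 * k) ≤ |inner2 ν (d i)|) ∨
      (∃ j, 1 / (Real.sqrt 2 * m) ≤ |inner2 ν (e j)|) := by
  have hsq : ν.1 ^ 2 + ν.2 ^ 2 = 1 := by
    have := congrArg (· ^ 2) hν
    simpa [norm2, Real.sq_sqrt (by positivity : (0:ℝ) ≤ ν.1 ^ 2 + ν.2 ^ 2)] using this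
  have hs2 : (0:ℝ) < Real.sqrt 2 := by positivity
  have hmax : 1 / Real.sqrt 2 ≤ |ν.1| ∨ 1 / Real.sqrt 2 ≤ |ν.2| := by
    by_contra hc
    push_neg at hc
    have h1 : ν.1 ^ 2 < (1 / Real.sqrt 2) ^ 2 := by
      rw [← sq_abs]; exact pow_lt_pow_left₀ hc.1 (abs_nonneg _) (by norm_num)
    have h2 : ν.2 ^ 2 < (1 / Real.sqrt 2) ^ 2 := by
      rw [← sq_abs]; exact pow_lt_pow_left₀ hc.2 (abs_nonneg _) (by norm_num)
    have : (1 / Real.sqrt 2) ^ 2 = 1 / 2 := by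
      rw [div_pow, Real.sq_sqrt (by norm_num : (0:ℝ) ≤ 2)]; norm_num
    linarith
  rcases hmax with h | h
  · left
    have hsum : ∑ i, inner2 ν (d i) = ν.1 := by
      rw [aux_inner_sum, hd]; simp [inner2]
    have : 1 / Real.sqrt 2 ≤ |∑ i, inner2 ν (d i)| := by rw [hsum]; exact h
    obtain ⟨i, hi⟩ := aux_pigeon hk _ _ this
    exact ⟨i, by rwa [div_div] at hi⟩
  · right
    have hsum : ∑ j, inner2 ν (e j) = ν.2 := by
      rw [aux_inner_sum, he]; simp [inner2]
    have : 1 / Real.sqrt 2 ≤ |∑ j, inner2 ν (e j)| := by rw [hsum]; exact h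
    obtain ⟨j, hj⟩ := aux_pigeon hm _ _ this
    exact ⟨j, by rwa [div_div] at hj⟩
end

section
/- Let w be a connected positive weight on n vertices and A(w) its weight matrix. Let L > 0 and M > 0 be such that L ≤ w i j for every ordered pair (i, j) with w i j > 0, and |w i j − w j i| ≤ M for all i, j. Then: (1) w i j / w j i ≤ 1 + M/L for every ordered pair (i, j) with w i j > 0; and (2) if r : Fin n → ℝ × ℝ with coordinate functions rˣ, rʸ satisfies (A(w))ᵀ *ᵥ rˣ = 0 and (A(w))ᵀ *ᵥ rʸ = 0 and r is not identically zero, then ‖r i‖ ≤ (1 + M/L)^(n−1) · ‖r j‖ for all i, j ∈ Fin n. -/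
open Matrix Finset

/-!
A positive weight has `w j i ≥ L`, so `w i j ≤ w j i + M ≤ ρ w j i` with `ρ = 1 + M / L`.

For the norms, view `r` as `z : Fin n → ℂ`. The kernel equations say
`(∑ k, w j k) z j = ∑ i, w i j z i`, so `f = ‖z‖` is subinvariant:
`f j ∑ k, w j k ≤ ∑ i, w i j f i`. Summed over a vertex set `S`, the flow inside `S` cancels and
the weighted outflow of `f` from `S` is at most the inflow. Hence if `f ≥ m` on a proper nonempty
`S`, a crossing edge (which exists by connectivity) forces `ρ f b ≥ m` at some `b ∉ S`. Growing
`S` from `{i}` one vertex at a time gives `f i ≤ ρ ^ (n - 1) f j`.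
-/

lemma transpose_weightMatrix_mulVec_apply {n : ℕ} {w : Fin n → Fin n → ℝ} (hdiag : ∀ i, w i i = 0)
    (x : Fin n → ℝ) (j : Fin n) :
    ((weightMatrix w)ᵀ *ᵥ x) j = ∑ i, w i j * x i - (∑ k, w j k) * x j := by
  have hA : weightMatrix w = Matrix.of w - Matrix.diagonal fun i => ∑ k, w i k := by
    ext i k
    by_cases hik : i = k
    · subst hik
      simp [weightMatrix, hdiag]
    · simp [weightMatrix, hik]
  rw [hA, Matrix.transpose_sub, Matrix.sub_mulVec, Matrix.diagonal_transpose, Pi.sub_apply,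
    Matrix.mulVec_diagonal]
  simp [Matrix.mulVec, dotProduct, mul_comm]

lemma weight_le_mul_weight_swap {n : ℕ} {w : Fin n → Fin n → ℝ} (hw : IsConnPosWeight w)
    {L M : ℝ} (hL : 0 < L) (hLw : ∀ i j, 0 < w i j → L ≤ w i j)
    (hMw : ∀ i j, |w i j - w j i| ≤ M) (i j : Fin n) : w i j ≤ (1 + M / L) * w j i := by
  obtain ⟨hdiag, hnonneg, hsymm, -⟩ := hw
  rcases (hnonneg j i).eq_or_lt with hji | hji
  · have hij : w i j = 0 := by
      by_cases h : i = j
      · subst h; exact hdiag i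
      · exact le_antisymm (not_lt.1 fun hij => hji.not_lt ((hsymm i j h).1 hij)) (hnonneg i j)
    simp [hij, ← hji]
  · have hM : 0 ≤ M := (abs_nonneg _).trans (hMw i j)
    have hM' : M ≤ M / L * w j i := by
      rw [div_mul_eq_mul_div, le_div_iff₀ hL]
      exact mul_le_mul_of_nonneg_left (hLw j i hji) hM
    linarith [(abs_le.1 (hMw i j)).2]

lemma norm_smul_sum_le_sum_mul_norm {ι E : Type*} [Fintype ι] [SeminormedAddCommGroup E]
    [NormedSpace ℝ E] {w : ι → ι → ℝ} (hw : ∀ i j, 0 ≤ w i j) {v : ι → E} {j : ι}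
    (h : (∑ k, w j k) • v j = ∑ i, w i j • v i) :
    ‖v j‖ * ∑ k, w j k ≤ ∑ i, w i j * ‖v i‖ :=
  calc ‖v j‖ * ∑ k, w j k = ‖(∑ k, w j k) • v j‖ := by
        rw [norm_smul, Real.norm_of_nonneg (Finset.sum_nonneg fun k _ => hw j k), mul_comm]
    _ = ‖∑ i, w i j • v i‖ := by rw [h]
    _ ≤ ∑ i, ‖w i j • v i‖ := norm_sum_le _ _
    _ = ∑ i, w i j * ‖v i‖ := by simp only [norm_smul, Real.norm_of_nonneg (hw _ j)]

lemma SimpleGraph.Connected.exists_adj_mem_notMem {ι : Type*} [Fintype ι] {G : SimpleGraph ι}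
    (hG : G.Connected) {S : Finset ι} (hS : S.Nonempty) (hSu : S ≠ Finset.univ) :
    ∃ a ∈ S, ∃ b ∉ S, G.Adj a b := by
  obtain ⟨a, ha⟩ := hS
  obtain ⟨b, hb⟩ : ∃ b, b ∉ S := by simpa [Finset.eq_univ_iff_forall] using hSu
  obtain ⟨d, -, hd, hd'⟩ := (hG.preconnected a b).some.exists_boundary_dart (↑S) ha hb
  exact ⟨d.fst, hd, d.snd, hd', d.adj⟩

section Subinvariant

variable {ι : Type*} [Fintype ι] [DecidableEq ι] {w : ι → ι → ℝ} {f : ι → ℝ} {ρ : ℝ}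

lemma sum_outflow_le_sum_inflow (hf : ∀ j, f j * ∑ k, w j k ≤ ∑ i, w i j * f i)
    (S : Finset ι) : ∑ p ∈ S ×ˢ Sᶜ, w p.1 p.2 * f p.1 ≤ ∑ p ∈ S ×ˢ Sᶜ, w p.2 p.1 * f p.2 := by
  have hS := Finset.sum_le_sum fun j (_ : j ∈ S) => hf j
  simp only [mul_comm (f _), ← Finset.sum_add_sum_compl S, add_mul, Finset.sum_mul,
    Finset.sum_add_distrib] at hS
  have hinner : ∑ a ∈ S, ∑ b ∈ S, w a b * f a = ∑ a ∈ S, ∑ b ∈ S, w b a * f b :=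
    Finset.sum_comm
  rw [Finset.sum_product, Finset.sum_product]
  linarith

lemma exists_notMem_le_mul (hw : ∀ i j, 0 ≤ w i j) (hρ0 : 0 ≤ ρ)
    (hρ : ∀ i j, w i j ≤ ρ * w j i)
    (hconn : (SimpleGraph.fromRel fun i j => 0 < w i j).Connected)
    (hf0 : ∀ i, 0 ≤ f i) (hf : ∀ j, f j * ∑ k, w j k ≤ ∑ i, w i j * f i)
    {S : Finset ι} (hS : S.Nonempty) (hSu : S ≠ Finset.univ) {m : ℝ} (hm : ∀ a ∈ S, m ≤ f a) :
    ∃ b ∉ S, m ≤ ρ * f b := by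
  obtain ⟨a, ha, b, hb, hab⟩ := hconn.exists_adj_mem_notMem hS hSu
  have hba : 0 < w b a := by
    obtain ⟨-, h | h⟩ := hab
    · exact pos_of_mul_pos_right (h.trans_le (hρ a b)) hρ0
    · exact h
  by_contra! hlt
  have hmem : ∀ p ∈ S ×ˢ Sᶜ, p.1 ∈ S ∧ p.2 ∉ S := fun p hp => by simpa using hp
  have hout : m * ∑ p ∈ S ×ˢ Sᶜ, w p.2 p.1 ≤ ρ * ∑ p ∈ S ×ˢ Sᶜ, w p.1 p.2 * f p.1 := by
    rw [Finset.mul_sum, Finset.mul_sum]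
    refine Finset.sum_le_sum fun p hp => ?_
    calc m * w p.2 p.1 ≤ f p.1 * (ρ * w p.1 p.2) :=
          mul_le_mul (hm _ (hmem p hp).1) (hρ _ _) (hw _ _) (hf0 _)
      _ = ρ * (w p.1 p.2 * f p.1) := by ring
  have hin : ρ * ∑ p ∈ S ×ˢ Sᶜ, w p.2 p.1 * f p.2 < m * ∑ p ∈ S ×ˢ Sᶜ, w p.2 p.1 := by
    rw [Finset.mul_sum, Finset.mul_sum]
    refine Finset.sum_lt_sum (fun p hp => ?_) ⟨(a, b), by simpa using ⟨ha, hb⟩, ?_⟩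
    · calc ρ * (w p.2 p.1 * f p.2) = w p.2 p.1 * (ρ * f p.2) := by ring
        _ ≤ w p.2 p.1 * m := mul_le_mul_of_nonneg_left (hlt _ (hmem p hp).2).le (hw _ _)
        _ = m * w p.2 p.1 := mul_comm _ _
    · calc ρ * (w b a * f b) = w b a * (ρ * f b) := by ring
        _ < w b a * m := mul_lt_mul_of_pos_left (hlt b hb) hba
        _ = m * w b a := mul_comm _ _
  linarith [mul_le_mul_of_nonneg_left (sum_outflow_le_sum_inflow hf S) hρ0]

lemma min_le_card_filter_le_pow_mul (hw : ∀ i j, 0 ≤ w i j) (hρ1 : 1 ≤ ρ)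
    (hρ : ∀ i j, w i j ≤ ρ * w j i)
    (hconn : (SimpleGraph.fromRel fun i j => 0 < w i j).Connected)
    (hf0 : ∀ i, 0 ≤ f i) (hf : ∀ j, f j * ∑ k, w j k ≤ ∑ i, w i j * f i) (i : ι) (k : ℕ) :
    min (k + 1) (Fintype.card ι) ≤ #{a | f i ≤ ρ ^ k * f a} := by
  induction k with
  | zero => exact (min_le_left _ _).trans (Finset.card_pos.2 ⟨i, by simp⟩)
  | succ k ih =>
    set S : Finset ι := {a | f i ≤ ρ ^ k * f a}
    set T : Finset ι := {a | f i ≤ ρ ^ (k + 1) * f a}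
    have hsub : S ⊆ T := fun a ha => by
      simp only [S, T, Finset.mem_filter_univ] at ha ⊢
      exact ha.trans (mul_le_mul_of_nonneg_right (pow_le_pow_right₀ hρ1 k.le_succ) (hf0 a))
    by_cases hSu : S = Finset.univ
    · rw [hSu, Finset.univ_subset_iff] at hsub
      simp [hsub, T]
    have hρk : 0 < ρ ^ k := pow_pos (zero_lt_one.trans_le hρ1) k
    have hiS : i ∈ S := by
      simpa [S] using le_mul_of_one_le_left (hf0 i) (one_le_pow₀ hρ1)
    obtain ⟨b, hbS, hb⟩ := exists_notMem_le_mul hw (zero_le_one.trans hρ1) hρ hconn hf0 hf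
      ⟨i, hiS⟩ hSu (m := f i / ρ ^ k) fun a ha => by
        rw [div_le_iff₀' hρk]; simpa [S] using ha
    have hinsert : insert b S ⊆ T := by
      refine Finset.insert_subset ?_ hsub
      rw [div_le_iff₀' hρk, ← mul_assoc, ← pow_succ] at hb
      simpa [T] using hb
    have hST := Finset.card_le_card hinsert
    rw [Finset.card_insert_of_notMem hbS] at hST
    have hS := Finset.card_lt_card (Finset.ssubset_univ_iff.2 hSu)
    rw [Finset.card_univ] at hS
    omega

theorem le_pow_card_sub_one_mul (hw : ∀ i j, 0 ≤ w i j) (hρ1 : 1 ≤ ρ)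
    (hρ : ∀ i j, w i j ≤ ρ * w j i)
    (hconn : (SimpleGraph.fromRel fun i j => 0 < w i j).Connected)
    (hf0 : ∀ i, 0 ≤ f i) (hf : ∀ j, f j * ∑ k, w j k ≤ ∑ i, w i j * f i) (i j : ι) :
    f i ≤ ρ ^ (Fintype.card ι - 1) * f j := by
  have hcard := min_le_card_filter_le_pow_mul hw hρ1 hρ hconn hf0 hf i (Fintype.card ι - 1)
  rw [Nat.sub_add_cancel (Fintype.card_pos_iff.2 ⟨i⟩), min_self, ← Finset.card_univ] at hcard
  simpa using Finset.filter_card_eq (hcard.antisymm' (Finset.card_le_univ _)) j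

end Subinvariant

theorem stmt_13_general {n : ℕ} (w : Fin n → Fin n → ℝ)
    (hw : IsConnPosWeight w) (L M : ℝ) (hL : 0 < L)
    (hLw : ∀ i j, 0 < w i j → L ≤ w i j)
    (hMw : ∀ i j, |w i j - w j i| ≤ M) :
    (∀ i j, 0 < w i j → w i j / w j i ≤ 1 + M / L) ∧
      (∀ r : Fin n → ℝ × ℝ,
        (weightMatrix w)ᵀ *ᵥ (fun i => (r i).1) = 0 →
        (weightMatrix w)ᵀ *ᵥ (fun i => (r i).2) = 0 →
        r ≠ 0 →
        ∀ i j, norm2 (r i) ≤ (1 + M / L) ^ (n - 1) * norm2 (r j)) := by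
  have hratio := weight_le_mul_weight_swap hw hL hLw hMw
  obtain ⟨hdiag, hnonneg, hsymm, hconn⟩ := hw
  refine ⟨fun i j hij => ?_, fun r hx hy _ i j => ?_⟩
  · have hne : i ≠ j := by rintro rfl; exact hij.ne' (hdiag i)
    rw [div_le_iff₀ ((hsymm i j hne).1 hij)]
    exact hratio i j
  · have hρ1 : 1 ≤ 1 + M / L :=
      le_add_of_nonneg_right (div_nonneg ((abs_nonneg _).trans (hMw i j)) hL.le)
    set z : Fin n → ℂ := fun k => (r k).1 + (r k).2 * Complex.I
    have hz : ∀ v, (∑ k, w v k) • z v = ∑ u, w u v • z u := by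
      intro v
      have hxv := congrFun hx v
      have hyv := congrFun hy v
      rw [transpose_weightMatrix_mulVec_apply hdiag, Pi.zero_apply, sub_eq_zero] at hxv hyv
      apply Complex.ext <;> simp [z, Complex.re_sum, Complex.im_sum, hxv, hyv]
    have hnorm : ∀ k, norm2 (r k) = ‖z k‖ := fun k => (Complex.norm_add_mul_I _ _).symm
    simpa [hnorm] using le_pow_card_sub_one_mul hnonneg hρ1 hratio hconn
      (fun k => norm_nonneg (z k)) (fun v => norm_smul_sum_le_sum_mul_norm hnonneg (hz v)) i j

/-- If `L` lower-bounds all positive weights and `M` bounds all differences `|wᵢⱼ - wⱼᵢ|`,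
then all weight ratios are at most `1 + M/L`, and the norms of any not-identically-zero
left-kernel family `r : Fin n → ℝ × ℝ` are comparable with ratio at most
`(1 + M/L)^(n-1)`. -/
theorem stmt_13 {n : ℕ} (hn : 2 ≤ n) (w : Fin n → Fin n → ℝ)
    (hw : IsConnPosWeight w) (L M : ℝ) (hL : 0 < L) (hM : 0 < M)
    (hLw : ∀ i j, 0 < w i j → L ≤ w i j)
    (hMw : ∀ i j, |w i j - w j i| ≤ M) :
    (∀ i j, 0 < w i j → w i j / w j i ≤ 1 + M / L) ∧
      (∀ r : Fin n → ℝ × ℝ,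
        (weightMatrix w)ᵀ *ᵥ (fun i => (r i).1) = 0 →
        (weightMatrix w)ᵀ *ᵥ (fun i => (r i).2) = 0 →
        r ≠ 0 →
        ∀ i j, norm2 (r i) ≤ (1 + M / L) ^ (n - 1) * norm2 (r j)) :=
  stmt_13_general w hw L M hL hLw hMw
end
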